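/- arXiv:0905.2254 — 3 statements merged into one kernel-verified Lean document; each statement's English description precedes it below -/
import Mathlib

section
/- For every real β > −1 and every real m (positive or negative), the ratio of the integral ∫₀ˣ t^β · (log(1/t))^m dt to the quantity x^(β+1) · (log(1/x))^m / (β+1) tends to 1 as x tends to 0 from the right; that is, ∫ x^β u^m dx = x^(β+1) u^m / (β+1) asymptotically, where u = log(1/x). -/
/-!
L'Hôpital's rule at `0⁺`. With `L = -log x`, both `∫₀ˣ t^β L(t)^m dt` and
`x^(β+1) L^m / (β+1)` tend to `0`, and the derivative of the latter is
`x^β L^(m-1) ((β+1) L - m) / (β+1)`, so the ratio of the derivatives is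
`(β+1) L / ((β+1) L - m) → 1`. The integral exists because `t^β L(t)^m = O(t^γ)`
for every `γ < β`, in particular for some `γ > -1`.
-/

open Filter Real MeasureTheory Set Topology

lemma tendsto_neg_log_nhdsGT_zero : Tendsto (fun x : ℝ => -log x) (𝓝[>] 0) atTop :=
  tendsto_neg_atBot_atTop.comp tendsto_log_nhdsGT_zero

lemma tendsto_rpow_mul_neg_log_rpow_nhdsGT_zero {a : ℝ} (ha : 0 < a) (m : ℝ) :
    Tendsto (fun x : ℝ => x ^ a * (-log x) ^ m) (𝓝[>] 0) (𝓝 0) := by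
  refine ((tendsto_rpow_mul_exp_neg_mul_atTop_nhds_zero m a ha).comp
    tendsto_neg_log_nhdsGT_zero).congr' ?_
  filter_upwards [self_mem_nhdsWithin] with x (hx : 0 < x)
  rw [Function.comp_apply, neg_mul_neg, mul_comm a, ← rpow_def_of_pos hx, mul_comm]

lemma integrableOn_Ioo_of_integrableAtFilter_nhdsGT {E : Type*} [NormedAddCommGroup E]
    {f : ℝ → E} {a b : ℝ} (hfa : IntegrableAtFilter f (𝓝[>] a))
    (hf : ContinuousOn f (Ioc a b)) :
    IntegrableOn f (Ioo a b) := by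
  obtain ⟨s, hs, hfs⟩ := hfa
  obtain ⟨c, hac, hcs⟩ := mem_nhdsGT_iff_exists_Ioo_subset.1 hs
  have hIcc : IntegrableOn f (Icc c b) :=
    (hf.mono fun t ht => ⟨hac.out.trans_le ht.1, ht.2⟩).integrableOn_Icc
  refine ((hfs.mono_set hcs).union hIcc).mono_set fun t ht => ?_
  rcases lt_or_ge t c with htc | htc
  exacts [Or.inl ⟨ht.1, htc⟩, Or.inr ⟨htc, ht.2.le⟩]

lemma continuousOn_rpow_mul_neg_log_rpow (β m : ℝ) :
    ContinuousOn (fun t : ℝ => t ^ β * (-log t) ^ m) (Ioo 0 1) := by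
  intro t ⟨ht0, ht1⟩
  have hlog : 0 < -log t := neg_pos.2 (log_neg ht0 ht1)
  exact ((continuousAt_rpow_const t β (Or.inl ht0.ne')).mul
    ((continuousAt_log ht0.ne').neg.rpow_const (Or.inl hlog.ne'))).continuousWithinAt

lemma rpow_mul_neg_log_rpow_isBigO_rpow {β γ : ℝ} (hγβ : γ < β) (m : ℝ) :
    (fun t : ℝ => t ^ β * (-log t) ^ m) =O[𝓝[>] 0] fun t => t ^ γ := by
  have hsmall := (tendsto_rpow_mul_neg_log_rpow_nhdsGT_zero (sub_pos.2 hγβ) m).isBigO_one ℝ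
  refine ((Asymptotics.isBigO_refl (fun t : ℝ => t ^ γ) _).mul hsmall).congr' ?_ (by simp)
  filter_upwards [self_mem_nhdsWithin] with t (ht : 0 < t)
  rw [← mul_assoc, ← rpow_add ht, add_sub_cancel]

lemma integrableOn_rpow_mul_neg_log_rpow {β : ℝ} (hβ : -1 < β) (m : ℝ) {x : ℝ}
    (hx : x < 1) :
    IntegrableOn (fun t : ℝ => t ^ β * (-log t) ^ m) (Ioo 0 x) := by
  refine integrableOn_Ioo_of_integrableAtFilter_nhdsGT ?_
    ((continuousOn_rpow_mul_neg_log_rpow β m).mono (Ioc_subset_Ioo_right hx))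
  have hγ : -1 < (β - 1) / 2 := by linarith
  refine (rpow_mul_neg_log_rpow_isBigO_rpow (by linarith) m).integrableAtFilter
    ?_ ⟨Ioo 0 1, Ioo_mem_nhdsGT one_pos,
      (intervalIntegral.integrableOn_Ioo_rpow_iff one_pos).2 hγ⟩
  exact ⟨Ioo 0 1, Ioo_mem_nhdsGT one_pos,
    (continuousOn_rpow_mul_neg_log_rpow β m).aestronglyMeasurable measurableSet_Ioo⟩

lemma hasDerivAt_rpow_add_one_mul_neg_log_rpow (a m : ℝ) {x : ℝ} (hx0 : 0 < x) (hx1 : x < 1) :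
    HasDerivAt (fun y : ℝ => y ^ (a + 1) * (-log y) ^ m)
      (x ^ a * (-log x) ^ (m - 1) * ((a + 1) * -log x - m)) x := by
  have hlog : 0 < -log x := neg_pos.2 (log_neg hx0 hx1)
  have hpow := hasDerivAt_rpow_const (p := a + 1) (Or.inl hx0.ne')
  have hlogpow := (hasDerivAt_rpow_const (p := m) (Or.inl hlog.ne')).comp x
    (hasDerivAt_log hx0.ne').neg
  refine (hpow.mul hlogpow).congr_deriv ?_
  rw [add_sub_cancel_right, rpow_add_one hx0.ne', rpow_sub_one hlog.ne', Function.comp_apply,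
    Pi.neg_apply]
  have := (log_neg hx0 hx1).ne
  field_simp
  ring

lemma tendsto_div_sub_atTop (c : ℝ) : Tendsto (fun z : ℝ => z / (z - c)) atTop (𝓝 1) := by
  have h : Tendsto (fun z : ℝ => 1 - c / z) atTop (𝓝 1) := by
    simpa using (tendsto_const_nhds (x := (1 : ℝ))).sub
      ((tendsto_const_nhds (x := c)).div_atTop tendsto_id)
  have h' := h.inv₀ one_ne_zero
  rw [inv_one] at h'
  refine h'.congr' ?_
  filter_upwards [eventually_ne_atTop 0] with z hz
  rw [one_sub_div hz, inv_div]

lemma hasDerivAt_integral_rpow_mul_neg_log_rpow {β : ℝ} (hβ : -1 < β) (m : ℝ) {x : ℝ}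
    (hx0 : 0 < x) (hx1 : x < 1) :
    HasDerivAt (fun y => ∫ t in (0 : ℝ)..y, t ^ β * (-log t) ^ m)
      (x ^ β * (-log x) ^ m) x := by
  have hcont := continuousOn_rpow_mul_neg_log_rpow β m
  refine intervalIntegral.integral_hasDerivAt_right ?_
    (hcont.stronglyMeasurableAtFilter isOpen_Ioo x ⟨hx0, hx1⟩)
    (hcont.continuousAt (Ioo_mem_nhds hx0 hx1))
  exact (intervalIntegrable_iff_integrableOn_Ioo_of_le hx0.le).2
    (integrableOn_rpow_mul_neg_log_rpow hβ m hx1)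

lemma tendsto_integral_rpow_mul_neg_log_rpow_nhdsGT_zero {β : ℝ} (hβ : -1 < β) (m : ℝ) :
    Tendsto (fun y => ∫ t in (0 : ℝ)..y, t ^ β * (-log t) ^ m) (𝓝[>] 0) (𝓝 0) := by
  have hint : IntervalIntegrable (fun t : ℝ => t ^ β * (-log t) ^ m) volume 0 (1 / 2) :=
    (intervalIntegrable_iff_integrableOn_Ioo_of_le (by norm_num)).2
      (integrableOn_rpow_mul_neg_log_rpow hβ m (by norm_num))
  have hcont := intervalIntegral.continuousWithinAt_primitive
    (b₀ := 0) (b₁ := 0) (b₂ := 1 / 2) Real.volume_singleton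
    (by rwa [min_self, max_eq_right (by norm_num)])
  simpa using
    hcont.tendsto.mono_left (nhdsWithin_le_of_mem (Icc_mem_nhdsGT (by norm_num)))

-- The denominator is the derivative of `x ^ (β + 1) * (-log x) ^ m / (β + 1)`.
lemma tendsto_rpow_mul_neg_log_rpow_div_deriv {β : ℝ} (hβ : -1 < β) (m : ℝ) :
    Tendsto (fun x : ℝ => x ^ β * (-log x) ^ m /
      (x ^ β * (-log x) ^ (m - 1) * ((β + 1) * -log x - m) / (β + 1))) (𝓝[>] 0) (𝓝 1) := by
  refine ((tendsto_div_sub_atTop m).comp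
    (tendsto_neg_log_nhdsGT_zero.const_mul_atTop (by linarith : 0 < β + 1))).congr' ?_
  filter_upwards [Ioo_mem_nhdsGT one_pos] with x ⟨hx0, hx1⟩
  have hlog : 0 < -log x := neg_pos.2 (log_neg hx0 hx1)
  have := (rpow_pos_of_pos hx0 β).ne'
  have := (log_neg hx0 hx1).ne
  rw [Function.comp_apply, rpow_sub_one hlog.ne']
  field_simp

theorem integral_rpow_mul_log_inv_rpow_ratio_tendsto_one (β : ℝ) (hβ : -1 < β)
    (m : ℝ) :
    Tendsto (fun x : ℝ =>
        (∫ t in Set.Ioo (0 : ℝ) x, t ^ β * (Real.log (1 / t)) ^ m) /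
          (x ^ (β + 1) * (Real.log (1 / x)) ^ m / (β + 1)))
      (nhdsWithin 0 (Set.Ioi 0)) (nhds 1) := by
  have hβ1 : 0 < β + 1 := by linarith
  have hx : ∀ᶠ x in 𝓝[>] (0 : ℝ), x ∈ Ioo 0 1 ∧ m < (β + 1) * -log x :=
    Filter.Eventually.and (Ioo_mem_nhdsGT one_pos)
      ((tendsto_neg_log_nhdsGT_zero.const_mul_atTop hβ1).eventually_gt_atTop m)
  have hlim := HasDerivAt.lhopital_zero_nhdsGT
    (hx.mono fun x hx => hasDerivAt_integral_rpow_mul_neg_log_rpow hβ m hx.1.1 hx.1.2)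
    (hx.mono fun x hx =>
      (hasDerivAt_rpow_add_one_mul_neg_log_rpow β m hx.1.1 hx.1.2).div_const (β + 1))
    (hx.mono fun x ⟨⟨hx0, hx1⟩, hxm⟩ => by
      have hlog : 0 < -log x := neg_pos.2 (log_neg hx0 hx1)
      have : 0 < (β + 1) * -log x - m := sub_pos.2 hxm
      positivity)
    (tendsto_integral_rpow_mul_neg_log_rpow_nhdsGT_zero hβ m)
    (by simpa using (tendsto_rpow_mul_neg_log_rpow_nhdsGT_zero hβ1 m).div_const (β + 1))
    (tendsto_rpow_mul_neg_log_rpow_div_deriv hβ m)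
  refine hlim.congr' ?_
  filter_upwards [self_mem_nhdsWithin] with x (hx : 0 < x)
  rw [intervalIntegral.integral_of_le hx.le, integral_Ioc_eq_integral_Ioo]
  simp only [one_div, log_inv]
end

section
/- For all real numbers α > 0 and β > 0 and every real n, the function t ↦ t^n · exp(−α / t^β) is integrable on the interval (0, x) for each x > 0. -/
open Filter Real MeasureTheory Set Topology

/-- Redefining `f` at `a` as its right limit there makes it continuous on `Icc a b`. -/
theorem integrableOn_Ioc_of_continuousOn_of_tendsto_nhdsGT {E : Type*} [NormedAddCommGroup E]
    {μ : Measure ℝ} [IsLocallyFiniteMeasure μ] {f : ℝ → E} {a b : ℝ} {c : E}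
    (hf : ContinuousOn f (Ioc a b)) (ha : Tendsto f (𝓝[>] a) (𝓝 c)) :
    IntegrableOn f (Ioc a b) μ := by
  classical
  have hcont : ContinuousOn (Function.update f a c) (Icc a b) := by
    rw [continuousOn_update_iff, Icc_sdiff_left]
    exact ⟨hf, fun _ => ha.mono_left (nhdsWithin_mono _ Ioc_subset_Ioi_self)⟩
  exact (hcont.integrableOn_Icc.mono_set Ioc_subset_Icc_self).congr_fun
    (fun t ht => Function.update_of_ne ht.1.ne' _ _) measurableSet_Ioc

theorem continuousOn_rpow_mul_exp_neg_div_rpow (α β n : ℝ) :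
    ContinuousOn (fun t : ℝ => t ^ n * exp (-α / t ^ β)) (Ioi 0) := by
  intro t (ht : 0 < t)
  exact ((continuousAt_rpow_const t n (.inl ht.ne')).mul (continuous_exp.continuousAt.comp
    (continuousAt_const.div (continuousAt_rpow_const t β (.inl ht.ne'))
      (rpow_pos_of_pos ht β).ne'))).continuousWithinAt

/-- Substituting `u = t ^ (-β)` turns this into `u ^ (-n / β) * exp (-α * u) → 0` as `u → ∞`. -/
theorem tendsto_rpow_mul_exp_neg_div_rpow_nhdsGT_zero {α β : ℝ} (hα : 0 < α) (hβ : 0 < β)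
    (n : ℝ) : Tendsto (fun t : ℝ => t ^ n * exp (-α / t ^ β)) (𝓝[>] 0) (𝓝 0) := by
  refine ((tendsto_rpow_mul_exp_neg_mul_atTop_nhds_zero (-n / β) α hα).comp
    (tendsto_rpow_neg_nhdsGT_zero (neg_lt_zero.2 hβ))).congr' ?_
  filter_upwards [self_mem_nhdsWithin] with t (ht : 0 < t)
  have hn : -β * (-n / β) = n := by field_simp
  simp only [Function.comp]
  rw [← rpow_mul ht.le, hn, rpow_neg ht.le, ← div_eq_mul_inv]

theorem integrableOn_rpow_mul_exp_neg_inv_rpow_general (α β : ℝ) (hα : 0 < α)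
    (hβ : 0 < β) (n : ℝ) (x : ℝ) :
    IntegrableOn (fun t : ℝ => t ^ n * Real.exp (-α / t ^ β)) (Set.Ioo 0 x) :=
  (integrableOn_Ioc_of_continuousOn_of_tendsto_nhdsGT
    ((continuousOn_rpow_mul_exp_neg_div_rpow α β n).mono Ioc_subset_Ioi_self)
    (tendsto_rpow_mul_exp_neg_div_rpow_nhdsGT_zero hα hβ n)).mono_set Ioo_subset_Ioc_self

theorem integrableOn_rpow_mul_exp_neg_inv_rpow (α β : ℝ) (hα : 0 < α)
    (hβ : 0 < β) (n : ℝ) (x : ℝ) (hx : 0 < x) :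
    IntegrableOn (fun t : ℝ => t ^ n * Real.exp (-α / t ^ β)) (Set.Ioo 0 x) :=
  integrableOn_rpow_mul_exp_neg_inv_rpow_general α β hα hβ n x
end

section
/- For all real numbers α > 0 and β > 0 and all real numbers k and m (positive or negative), the ratio of the integral ∫₀ˣ t^k · (log(1/t))^m · exp(−α / t^β) dt to the quantity (1/(αβ)) · x^(k+β+1) · (log(1/x))^m · exp(−α / x^β) tends to 1 as x tends to 0 from the right; that is, ∫ x^k u^m dx / v = x^(k+β+1) u^m / (αβ · v) asymptotically, where u = log(1/x) and v = exp(α / x^β). -/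
/-!
Substituting `z = 1 / x`, the integrand `f = rpowLogExp α β k m` and the normaliser
`G = rpowLogExp α β (k + β + 1) m / (α β)` both tend to `0` as `x → 0⁺`, since `exp (-α z ^ β)`
beats every power of `z` and of `log z`. Differentiating, `G' = f · (1 + O(x ^ β))`, so
L'Hôpital's rule applied to `∫₀ˣ f` and `G` gives the limit `1`.
-/

open Filter Real MeasureTheory Set Topology Asymptotics

section Primitive

variable {E : Type*} [NormedAddCommGroup E]

theorem exists_integrableOn_Ioo_of_tendsto_nhdsGT {f : ℝ → E} {a c : ℝ} {l : E} (hac : a < c)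
    (hf : ContinuousOn f (Ioo a c)) (hlim : Tendsto f (𝓝[>] a) (𝓝 l)) :
    ∃ b ∈ Ioc a c, IntegrableOn f (Ioo a b) := by
  have hmeas : StronglyMeasurableAtFilter f (𝓝[>] a) := by
    simpa only [nhdsWithin_Ioo_eq_nhdsGT hac] using
      hf.stronglyMeasurableAtFilter_nhdsWithin measurableSet_Ioo a
  obtain ⟨s, hs, hint⟩ := hlim.integrableAtFilter hmeas (volume.finiteAt_nhdsWithin _ _)
  obtain ⟨b, hb, hsub⟩ := (mem_nhdsGT_iff_exists_mem_Ioc_Ioo_subset hac).mp hs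
  exact ⟨b, hb, hint.mono_set hsub⟩

theorem tendsto_setIntegral_Ioo_nhdsGT [NormedSpace ℝ E] {f : ℝ → E} {a b : ℝ} (hab : a < b)
    (hf : IntegrableOn f (Ioo a b)) :
    Tendsto (fun x => ∫ t in Ioo a x, f t) (𝓝[>] a) (𝓝 0) := by
  have hcont := intervalIntegral.continuousOn_primitive
    ((integrableOn_Icc_iff_integrableOn_Ioo).mpr hf) a (left_mem_Icc.mpr hab.le)
  have hlim := (hcont.mono_of_mem_nhdsWithin (Icc_mem_nhdsGT hab)).tendsto
  rw [Ioc_self, Measure.restrict_empty, integral_zero_measure] at hlim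
  refine hlim.congr' ?_
  filter_upwards with x using integral_Ioc_eq_integral_Ioo

theorem hasDerivAt_setIntegral_Ioo [NormedSpace ℝ E] [CompleteSpace E] {f : ℝ → E} {a x : ℝ}
    (hax : a < x) (hf : IntegrableOn f (Ioo a x)) (hmeas : StronglyMeasurableAtFilter f (𝓝 x))
    (hcont : ContinuousAt f x) :
    HasDerivAt (fun y => ∫ t in Ioo a y, f t) (f x) x := by
  have hint : IntervalIntegrable f volume a x :=
    (intervalIntegrable_iff_integrableOn_Ioo_of_le hax.le).mpr hf
  refine (intervalIntegral.integral_hasDerivAt_right hint hmeas hcont).congr_of_eventuallyEq ?_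
  filter_upwards [eventually_gt_nhds hax] with y hy
  rw [intervalIntegral.integral_of_le hy.le, integral_Ioc_eq_integral_Ioo]

end Primitive

theorem tendsto_setIntegral_Ioo_div_nhdsGT {f g g' : ℝ → ℝ} {a c L : ℝ} {l : Filter ℝ}
    (hac : a < c) (hf : ContinuousOn f (Ioo a c)) (hfa : Tendsto f (𝓝[>] a) (𝓝 L))
    (hgg' : ∀ᶠ x in 𝓝[>] a, HasDerivAt g (g' x) x) (hg' : ∀ᶠ x in 𝓝[>] a, g' x ≠ 0)
    (hga : Tendsto g (𝓝[>] a) (𝓝 0)) (hdiv : Tendsto (fun x => f x / g' x) (𝓝[>] a) l) :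
    Tendsto (fun x => (∫ t in Ioo a x, f t) / g x) (𝓝[>] a) l := by
  obtain ⟨b, ⟨hab, hbc⟩, hint⟩ := exists_integrableOn_Ioo_of_tendsto_nhdsGT hac hf hfa
  refine HasDerivAt.lhopital_zero_nhdsGT ?_ hgg' hg' (tendsto_setIntegral_Ioo_nhdsGT hab hint)
    hga hdiv
  filter_upwards [Ioo_mem_nhdsGT hab] with x hx
  have hxc : x ∈ Ioo a c := ⟨hx.1, hx.2.trans_le hbc⟩
  exact hasDerivAt_setIntegral_Ioo hx.1 (hint.mono_set (Ioo_subset_Ioo_right hx.2.le))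
    (hf.stronglyMeasurableAtFilter isOpen_Ioo x hxc) (hf.continuousAt (isOpen_Ioo.mem_nhds hxc))

theorem isLittleO_exp_neg_mul_rpow_rpow_atTop {a b : ℝ} (ha : 0 < a) (hb : 0 < b) (s : ℝ) :
    (fun z : ℝ => exp (-a * z ^ b)) =o[atTop] fun z => z ^ s := by
  refine ((isLittleO_exp_neg_mul_rpow_atTop ha (s / b)).comp_tendsto
    (tendsto_rpow_atTop hb)).congr' EventuallyEq.rfl ?_
  filter_upwards [eventually_ge_atTop 0] with z hz
  simp only [Function.comp_apply, ← rpow_mul hz, mul_div_cancel₀ s hb.ne']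

theorem tendsto_rpow_mul_log_rpow_mul_exp_neg_mul_rpow_atTop_nhds_zero {a b : ℝ} (ha : 0 < a)
    (hb : 0 < b) (c m : ℝ) :
    Tendsto (fun z : ℝ => z ^ c * log z ^ m * exp (-a * z ^ b)) atTop (𝓝 0) := by
  have h := ((isBigO_refl (fun z : ℝ => z ^ c) atTop).mul_isLittleO
    (isLittleO_log_rpow_rpow_atTop m one_pos)).mul
    (isLittleO_exp_neg_mul_rpow_rpow_atTop ha hb (-(c + 1)))
  refine (isLittleO_one_iff ℝ).mp (h.congr' EventuallyEq.rfl ?_)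
  filter_upwards [eventually_gt_atTop 0] with z hz
  rw [← rpow_add hz, ← rpow_add hz]
  norm_num

noncomputable def rpowLogExp (α β k m t : ℝ) : ℝ := t ^ k * log (1 / t) ^ m * exp (-α / t ^ β)

theorem tendsto_rpowLogExp_nhdsGT_zero {α β : ℝ} (hα : 0 < α) (hβ : 0 < β) (k m : ℝ) :
    Tendsto (rpowLogExp α β k m) (𝓝[>] 0) (𝓝 0) := by
  refine ((tendsto_rpow_mul_log_rpow_mul_exp_neg_mul_rpow_atTop_nhds_zero hα hβ (-k) m).comp
    tendsto_inv_nhdsGT_zero).congr' ?_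
  filter_upwards [self_mem_nhdsWithin] with x (hx : 0 < x)
  simp only [Function.comp_apply, rpowLogExp, inv_rpow hx.le, rpow_neg hx.le, inv_inv,
    neg_mul, div_eq_mul_inv, one_mul]

theorem log_one_div_pos {t : ℝ} (ht : t ∈ Ioo (0 : ℝ) 1) : 0 < log (1 / t) := by
  rw [one_div, log_inv, neg_pos]
  exact log_neg ht.1 ht.2

theorem rpowLogExp_pos (α β k m : ℝ) {t : ℝ} (ht : t ∈ Ioo (0 : ℝ) 1) :
    0 < rpowLogExp α β k m t := by
  have := log_one_div_pos ht
  have := ht.1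
  unfold rpowLogExp
  positivity

theorem continuousOn_rpowLogExp (α β k m : ℝ) : ContinuousOn (rpowLogExp α β k m) (Ioo 0 1) := by
  intro t ht
  have ht0 : t ≠ 0 := ht.1.ne'
  have hlog : ContinuousAt (fun t : ℝ => log (1 / t)) t :=
    (continuousAt_const.div continuousAt_id ht0).log (one_div_ne_zero ht0)
  refine ContinuousAt.continuousWithinAt ?_
  exact ((continuousAt_id.rpow_const (Or.inl ht0)).mul
    (hlog.rpow_const (Or.inl (log_one_div_pos ht).ne'))).mul
    (continuousAt_const.div (continuousAt_id.rpow_const (Or.inl ht0))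
      (rpow_pos_of_pos ht.1 β).ne').rexp

theorem hasDerivAt_rpowLogExp (α β k m : ℝ) {x : ℝ} (hx : x ∈ Ioo (0 : ℝ) 1) :
    HasDerivAt (rpowLogExp α β (k + β + 1) m)
      (rpowLogExp α β k m x * (α * β + (k + β + 1) * x ^ β - m * x ^ β / log (1 / x))) x := by
  have hx0 : x ≠ 0 := hx.1.ne'
  have hu := log_one_div_pos hx
  have hpow : HasDerivAt (fun x : ℝ => x ^ (k + β + 1)) ((k + β + 1) * x ^ (k + β + 1 - 1)) x :=
    hasDerivAt_rpow_const (Or.inl hx0)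
  have hlog : HasDerivAt (fun x : ℝ => log (1 / x)) (-x⁻¹) x := by
    simp only [one_div, log_inv]
    exact (hasDerivAt_log hx0).neg
  have hxβ : x ^ β ≠ 0 := (rpow_pos_of_pos hx.1 β).ne'
  have hexp := (((hasDerivAt_rpow_const (p := β) (Or.inl hx0)).inv hxβ).const_mul (-α)).exp
  refine ((hpow.mul (hlog.rpow_const (p := m) (Or.inl hu.ne'))).mul hexp).congr_deriv ?_
  simp only [rpowLogExp, Pi.mul_apply, Pi.inv_apply]
  rw [show k + β + 1 - 1 = k + β by ring, rpow_add hx.1, rpow_add hx.1, rpow_add hx.1,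
    rpow_sub hu, rpow_sub hx.1, rpow_one, rpow_one]
  field_simp
  ring

theorem tendsto_add_mul_rpow_sub_mul_rpow_div_log_one_div_nhdsGT_zero {β : ℝ} (hβ : 0 < β)
    (a c m : ℝ) :
    Tendsto (fun x : ℝ => a + c * x ^ β - m * x ^ β / log (1 / x)) (𝓝[>] 0) (𝓝 a) := by
  have hpow : Tendsto (fun x : ℝ => x ^ β) (𝓝[>] 0) (𝓝 0) := by
    simpa only [zero_rpow hβ.ne'] using
      (continuousAt_rpow_const 0 β (Or.inr hβ.le)).tendsto.mono_left nhdsWithin_le_nhds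
  have hlog : Tendsto (fun x : ℝ => log (1 / x)) (𝓝[>] 0) atTop := by
    simpa only [one_div, Function.comp_def] using tendsto_log_atTop.comp tendsto_inv_nhdsGT_zero
  simpa using ((tendsto_const_nhds.add (hpow.const_mul c)).sub
    ((hpow.const_mul m).div_atTop hlog))

theorem integral_rpow_log_exp_ratio_tendsto_one (α β : ℝ) (hα : 0 < α)
    (hβ : 0 < β) (k m : ℝ) :
    Tendsto (fun x : ℝ =>
        (∫ t in Set.Ioo (0 : ℝ) x,
            t ^ k * (Real.log (1 / t)) ^ m * Real.exp (-α / t ^ β)) /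
          (1 / (α * β) *
            (x ^ (k + β + 1) * (Real.log (1 / x)) ^ m * Real.exp (-α / x ^ β))))
      (nhdsWithin 0 (Set.Ioi 0)) (nhds 1) := by
  set f := rpowLogExp α β k m
  set φ := fun x : ℝ => α * β + (k + β + 1) * x ^ β - m * x ^ β / log (1 / x)
  have hαβ : α * β ≠ 0 := (mul_pos hα hβ).ne'
  have hφ : Tendsto φ (𝓝[>] 0) (𝓝 (α * β)) :=
    tendsto_add_mul_rpow_sub_mul_rpow_div_log_one_div_nhdsGT_zero hβ _ _ _
  have hsmall : ∀ᶠ x in 𝓝[>] 0, x ∈ Ioo (0 : ℝ) 1 ∧ φ x ≠ 0 :=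
    Eventually.and (Ioo_mem_nhdsGT one_pos) (hφ.eventually_ne hαβ)
  refine tendsto_setIntegral_Ioo_div_nhdsGT (f := f) (g' := fun x => 1 / (α * β) * (f x * φ x))
    one_pos (continuousOn_rpowLogExp α β k m) (tendsto_rpowLogExp_nhdsGT_zero hα hβ k m)
    ?_ ?_ ?_ ?_
  · filter_upwards [hsmall] with x ⟨hx, _⟩
    exact (hasDerivAt_rpowLogExp α β k m hx).const_mul _
  · filter_upwards [hsmall] with x ⟨hx, hφx⟩
    exact mul_ne_zero (one_div_ne_zero hαβ) (mul_ne_zero (rpowLogExp_pos α β k m hx).ne' hφx)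
  · have hG := (tendsto_rpowLogExp_nhdsGT_zero hα hβ (k + β + 1) m).const_mul (1 / (α * β))
    rwa [mul_zero] at hG
  · have hratio : Tendsto (fun x => α * β / φ x) (𝓝[>] 0) (𝓝 1) := by
      have := (tendsto_const_nhds (x := α * β)).div hφ hαβ
      rwa [div_self hαβ] at this
    refine hratio.congr' ?_
    filter_upwards [hsmall] with x ⟨hx, hφx⟩
    have hfx : f x ≠ 0 := (rpowLogExp_pos α β k m hx).ne'
    field_simp
end
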